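/- Post-processing (data-processing) inequality for trade-off functions: for probability distributions P, Q on a space X and any Markov kernel (randomized algorithm) K : X → Y, the trade-off function satisfies T(K(P), K(Q))(α) ≥ T(P,Q)(α) for all α ∈ [0,1], where K(P) denotes the pushforward of P under K. -/

import Mathlib

open Finset

def IsPMF {Ω : Type*} [Fintype Ω] (p : Ω → ℝ) : Prop :=
  (∀ x, 0 ≤ p x) ∧ ∑ x, p x = 1

/-- A Markov kernel (randomized algorithm) from `X` to `Y`. -/
def IsKernel {X Y : Type*} [Fintype X] [Fintype Y] (K : X → Y → ℝ) : Prop :=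
  ∀ x, IsPMF (K x)

/-- The pushforward `K(P)` of a distribution `P` under a Markov kernel `K`. -/
def push {X Y : Type*} [Fintype X] [Fintype Y] (K : X → Y → ℝ) (p : X → ℝ) : Y → ℝ :=
  fun y => ∑ x, p x * K x y

noncomputable def tradeoff {Ω : Type*} [Fintype Ω] (p q : Ω → ℝ) (α : ℝ) : ℝ :=
  sInf { β | ∃ φ : Ω → ℝ, (∀ x, φ x ∈ Set.Icc (0:ℝ) 1) ∧
    (∑ x, p x * φ x) ≤ α ∧ β = 1 - ∑ x, q x * φ x }

/-
A test `φ` on `Y` for the pushed-forward pair becomes the test `x ↦ ∑ y, K x y * φ y` on `X`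
("run `K`, then apply `φ`"). Since `K` is a Markov kernel this is again a test, and exchanging
the order of summation shows that it has the same size under `p` and the same power under `q`
as `φ` has under `K(p)` and `K(q)`. So every type II error achievable after post-processing is
already achievable before it, and the infimum over the larger set is smaller.
-/

def typeIIErrors {Ω : Type*} [Fintype Ω] (p q : Ω → ℝ) (α : ℝ) : Set ℝ :=
  { β | ∃ φ : Ω → ℝ, (∀ x, φ x ∈ Set.Icc (0:ℝ) 1) ∧
    (∑ x, p x * φ x) ≤ α ∧ β = 1 - ∑ x, q x * φ x }

theorem tradeoff_eq_sInf_typeIIErrors {Ω : Type*} [Fintype Ω] (p q : Ω → ℝ) (α : ℝ) :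
    tradeoff p q α = sInf (typeIIErrors p q α) :=
  rfl

theorem IsPMF.sum_mul_mem_Icc {Ω : Type*} [Fintype Ω] {p φ : Ω → ℝ} (hp : IsPMF p)
    (hφ : ∀ x, φ x ∈ Set.Icc (0:ℝ) 1) : ∑ x, p x * φ x ∈ Set.Icc (0:ℝ) 1 := by
  refine ⟨sum_nonneg fun x _ => mul_nonneg (hp.1 x) (hφ x).1, ?_⟩
  calc ∑ x, p x * φ x ≤ ∑ x, p x :=
        sum_le_sum fun x _ => mul_le_of_le_one_right (hp.1 x) (hφ x).2
    _ = 1 := hp.2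

theorem sum_push_mul {X Y : Type*} [Fintype X] [Fintype Y] (K : X → Y → ℝ) (p : X → ℝ)
    (φ : Y → ℝ) : ∑ y, push K p y * φ y = ∑ x, p x * ∑ y, K x y * φ y := by
  simp only [push, sum_mul, mul_sum, mul_assoc]
  exact sum_comm

theorem typeIIErrors_bddBelow {Ω : Type*} [Fintype Ω] (p : Ω → ℝ) {q : Ω → ℝ} (hq : IsPMF q)
    (α : ℝ) : BddBelow (typeIIErrors p q α) := by
  refine ⟨0, ?_⟩
  rintro β ⟨φ, hφ, -, rfl⟩
  exact sub_nonneg.2 (hq.sum_mul_mem_Icc hφ).2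

theorem one_mem_typeIIErrors {Ω : Type*} [Fintype Ω] (p q : Ω → ℝ) {α : ℝ} (hα : 0 ≤ α) :
    (1 : ℝ) ∈ typeIIErrors p q α :=
  ⟨0, fun _ => ⟨le_rfl, zero_le_one⟩, by simpa using hα, by simp⟩

theorem typeIIErrors_push_subset {X Y : Type*} [Fintype X] [Fintype Y] {K : X → Y → ℝ}
    (hK : IsKernel K) (p q : X → ℝ) (α : ℝ) :
    typeIIErrors (push K p) (push K q) α ⊆ typeIIErrors p q α := by
  rintro β ⟨φ, hφ, hsize, rfl⟩
  refine ⟨fun x => ∑ y, K x y * φ y, fun x => (hK x).sum_mul_mem_Icc hφ, ?_, ?_⟩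
  · rwa [← sum_push_mul]
  · rw [sum_push_mul]

theorem tradeoff_post_processing_general {X Y : Type*} [Fintype X] [Fintype Y]
    (p q : X → ℝ) (hq : IsPMF q)
    (K : X → Y → ℝ) (hK : IsKernel K) :
    ∀ α ∈ Set.Icc (0:ℝ) 1, tradeoff p q α ≤ tradeoff (push K p) (push K q) α := by
  intro α hα
  rw [tradeoff_eq_sInf_typeIIErrors, tradeoff_eq_sInf_typeIIErrors]
  exact csInf_le_csInf (typeIIErrors_bddBelow p hq α)
    ⟨1, one_mem_typeIIErrors _ _ hα.1⟩ (typeIIErrors_push_subset hK p q α)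

/-- Post-processing (data-processing) inequality for trade-off functions:
`T(K(P), K(Q))(α) ≥ T(P,Q)(α)` for every Markov kernel `K`. -/
theorem tradeoff_post_processing {X Y : Type*} [Fintype X] [Fintype Y]
    (p q : X → ℝ) (hp : IsPMF p) (hq : IsPMF q)
    (K : X → Y → ℝ) (hK : IsKernel K) :
    ∀ α ∈ Set.Icc (0:ℝ) 1, tradeoff p q α ≤ tradeoff (push K p) (push K q) α :=
  tradeoff_post_processing_general p q hq K hK
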